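/- Let Q be an admissible set of rational subspaces (i.e. closed under taking rational subspaces contained in a member), and let s̲ ∈ Q be of maximal dimension k. Then I_{s̲} ∩ I_{Q∖{s̲}} = I_{s̲} ∩ I_{k-1} = Σ_{t̲ ⊂ s̲, t̲ ∈ S_X(k-1)} I_{t̲}. -/

import Mathlib

/-!
Write `d_W` (`dCompl X W`) for the product of the forms `X i ∉ W`, so that `I_W = (d_W)`, and
`e_W` (`dRel X s W`) for the product of the forms `X i ∈ s ∖ W`, which divides `d_W`. The ideal
`E` generated by the `e_W` involves only forms from `s`, so it is stable under the substitution
`x ↦ x + T c` (`shiftAlong c`) for every `c ⊥ s`. For `v ∉ s`, choosing `⟨v, c⟩ = 1` turns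
multiplication by `⟨v, x⟩` into multiplication by the monic polynomial `T + ⟨v, x⟩`, so `⟨v, x⟩`
is a nonzerodivisor modulo `E`. Hence an element `d_s a` of `I_s ∩ Σ_W I_W` has `a ∈ E`, and it
lies in `Σ_W (d_s e_W) = Σ_W I_{W ∩ s}`. If `s ⊄ W`, then `I_{W ∩ s}` is the ideal of the rational
subspace spanned by `X ∩ W ∩ s`, a proper subspace of `s`, hence contained in a rational
hyperplane of `s`. Maximality of the dimension of `s` guarantees `s ⊄ W` for all `W ∈ Q ∖ {s}` and
for all `W` of dimension `k - 1`.
-/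

noncomputable section

open scoped BigOperators

def linP {n : ℕ} (a : Fin n → ℝ) : MvPolynomial (Fin n) ℝ :=
  ∑ i, MvPolynomial.C (a i) * MvPolynomial.X i

def RationalSub {n m : ℕ} (X : Fin m → Fin n → ℝ)
    (W : Submodule ℝ (Fin n → ℝ)) : Prop :=
  W = Submodule.span ℝ (Set.range X ∩ ↑W)

open Classical in
/-- The principal ideal I_{W} = (d_{X∖W}). -/
def Isub {n m : ℕ} (X : Fin m → Fin n → ℝ) (W : Submodule ℝ (Fin n → ℝ)) :
    Ideal (MvPolynomial (Fin n) ℝ) :=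
  Ideal.span {∏ i ∈ Finset.univ.filter (fun i => X i ∉ W), linP (X i)}

/-- I_j = Σ over rational subspaces of dimension j of I_{t̲}. -/
def Ilev {n m : ℕ} (X : Fin m → Fin n → ℝ) (j : ℕ) :
    Ideal (MvPolynomial (Fin n) ℝ) :=
  ⨆ W ∈ {W : Submodule ℝ (Fin n → ℝ) | RationalSub X W ∧ Module.finrank ℝ W = j},
    Isub X W

/-- I_Q = Σ_{s̲ ∈ Q} I_{s̲}. -/
def IQ {n m : ℕ} (X : Fin m → Fin n → ℝ) (Q : Set (Submodule ℝ (Fin n → ℝ))) :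
    Ideal (MvPolynomial (Fin n) ℝ) :=
  ⨆ W ∈ Q, Isub X W

/-- Q is admissible: every rational subspace contained in a member of Q
belongs to Q. -/
def Admissible {n m : ℕ} (X : Fin m → Fin n → ℝ)
    (Q : Set (Submodule ℝ (Fin n → ℝ))) : Prop :=
  (∀ W ∈ Q, RationalSub X W) ∧
  ∀ W ∈ Q, ∀ t : Submodule ℝ (Fin n → ℝ), RationalSub X t → t ≤ W → t ∈ Q

section

variable {n m : ℕ}

open Classical in
def dCompl (X : Fin m → Fin n → ℝ) (W : Submodule ℝ (Fin n → ℝ)) : MvPolynomial (Fin n) ℝ :=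
  ∏ i ∈ Finset.univ.filter (fun i => X i ∉ W), linP (X i)

open Classical in
def dRel (X : Fin m → Fin n → ℝ) (s W : Submodule ℝ (Fin n → ℝ)) : MvPolynomial (Fin n) ℝ :=
  ∏ i ∈ Finset.univ.filter (fun i => X i ∈ s ∧ X i ∉ W), linP (X i)

theorem Isub_eq_span_dCompl (X : Fin m → Fin n → ℝ) (W : Submodule ℝ (Fin n → ℝ)) :
    Isub X W = Ideal.span {dCompl X W} := rfl

open Classical in
theorem dCompl_dvd_dCompl (X : Fin m → Fin n → ℝ) {t s : Submodule ℝ (Fin n → ℝ)} (h : t ≤ s) :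
    dCompl X s ∣ dCompl X t :=
  Finset.prod_dvd_prod_of_subset _ _ _ <| Finset.monotone_filter_right _
    fun _ _ hs ht => hs (h ht)

theorem Isub_mono (X : Fin m → Fin n → ℝ) {t s : Submodule ℝ (Fin n → ℝ)} (h : t ≤ s) :
    Isub X t ≤ Isub X s :=
  Ideal.span_singleton_le_span_singleton.mpr (dCompl_dvd_dCompl X h)

open Classical in
theorem dRel_dvd_dCompl (X : Fin m → Fin n → ℝ) (s W : Submodule ℝ (Fin n → ℝ)) :
    dRel X s W ∣ dCompl X W :=
  Finset.prod_dvd_prod_of_subset _ _ _ <| Finset.monotone_filter_right _ fun _ _ h => h.2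

theorem dCompl_mul_dRel (X : Fin m → Fin n → ℝ) (s W : Submodule ℝ (Fin n → ℝ)) :
    dCompl X s * dRel X s W = dCompl X (W ⊓ s) := by
  classical
  rw [dCompl, dRel, dCompl, ← Finset.prod_union]
  · congr 1
    ext i
    simp only [Finset.mem_union, Finset.mem_filter, Finset.mem_univ, true_and, Submodule.mem_inf]
    tauto
  · exact Finset.disjoint_filter.mpr fun _ _ h h' => h h'.1

theorem dCompl_span_inter (X : Fin m → Fin n → ℝ) (W : Submodule ℝ (Fin n → ℝ)) :
    dCompl X (Submodule.span ℝ (Set.range X ∩ W)) = dCompl X W := by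
  classical
  refine Finset.prod_congr (Finset.filter_congr fun i _ => ?_) fun _ _ => rfl
  refine not_congr ⟨fun h => ?_, fun h => Submodule.subset_span ⟨Set.mem_range_self i, h⟩⟩
  exact Submodule.span_le.mpr Set.inter_subset_right h

theorem Isub_span_inter (X : Fin m → Fin n → ℝ) (W : Submodule ℝ (Fin n → ℝ)) :
    Isub X (Submodule.span ℝ (Set.range X ∩ W)) = Isub X W := by
  rw [Isub_eq_span_dCompl, Isub_eq_span_dCompl, dCompl_span_inter]

theorem rationalSub_span_inter (X : Fin m → Fin n → ℝ) (W : Submodule ℝ (Fin n → ℝ)) :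
    RationalSub X (Submodule.span ℝ (Set.range X ∩ W)) :=
  le_antisymm (Submodule.span_mono fun _ hx => ⟨hx.1, Submodule.subset_span hx⟩)
    (Submodule.span_le.mpr Set.inter_subset_right)

theorem RationalSub.exists_notMem {X : Fin m → Fin n → ℝ} {s t : Submodule ℝ (Fin n → ℝ)}
    (hs : RationalSub X s) (hst : ¬ s ≤ t) : ∃ i, X i ∈ s ∧ X i ∉ t := by
  by_contra! h
  refine hst (hs ▸ Submodule.span_le.mpr ?_)
  rintro _ ⟨⟨i, rfl⟩, hi⟩
  exact h i hi

theorem RationalSub.sup_span_singleton {X : Fin m → Fin n → ℝ} {t : Submodule ℝ (Fin n → ℝ)}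
    (ht : RationalSub X t) (i : Fin m) : RationalSub X (t ⊔ Submodule.span ℝ {X i}) := by
  refine le_antisymm (sup_le ?_ ?_) (Submodule.span_le.mpr Set.inter_subset_right)
  · exact ht.le.trans <| Submodule.span_mono <|
      Set.inter_subset_inter_right _ (SetLike.coe_mono le_sup_left)
  · exact Submodule.span_mono (Set.singleton_subset_iff.mpr
      ⟨Set.mem_range_self i, Submodule.mem_sup_right (Submodule.mem_span_singleton_self _)⟩)

theorem RationalSub.exists_le_finrank_eq_pred {X : Fin m → Fin n → ℝ}
    {s t : Submodule ℝ (Fin n → ℝ)} (hs : RationalSub X s) (ht : RationalSub X t) (hts : t < s) :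
    ∃ u, RationalSub X u ∧ t ≤ u ∧ u < s ∧
      Module.finrank ℝ u = Module.finrank ℝ s - 1 := by
  induction hd : Module.finrank ℝ s - 1 - Module.finrank ℝ t generalizing t with
  | zero =>
    have := Submodule.finrank_lt_finrank_of_lt hts
    exact ⟨t, ht, le_rfl, hts, by omega⟩
  | succ d ih =>
    obtain ⟨i, his, hit⟩ := hs.exists_notMem hts.not_ge
    have hrank := Submodule.finrank_sup_span_singleton hit
    have hle : t ⊔ Submodule.span ℝ {X i} ≤ s :=
      sup_le hts.le (Submodule.span_singleton_le_iff_mem _ _ |>.mpr his)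
    have hlt : t ⊔ Submodule.span ℝ {X i} < s :=
      hle.lt_of_ne fun h => by rw [h] at hrank; omega
    obtain ⟨u, hu, htu, hus, hrk⟩ := ih (ht.sup_span_singleton i) hlt (by omega)
    exact ⟨u, hu, le_sup_left.trans htu, hus, hrk⟩

def shiftAlong (c : Fin n → ℝ) :
    MvPolynomial (Fin n) ℝ →ₐ[ℝ] Polynomial (MvPolynomial (Fin n) ℝ) :=
  MvPolynomial.aeval fun j =>
    Polynomial.C (MvPolynomial.X j) + Polynomial.C (MvPolynomial.C (c j)) * Polynomial.X

theorem coeff_zero_shiftAlong (c : Fin n → ℝ) (p : MvPolynomial (Fin n) ℝ) :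
    (shiftAlong c p).coeff 0 = p := by
  induction p using MvPolynomial.induction_on with
  | C a => simp [shiftAlong, MvPolynomial.algebraMap_eq, Polynomial.algebraMap_apply]
  | add p q hp hq => rw [map_add, Polynomial.coeff_add, hp, hq]
  | mul_X p j hp =>
    rw [map_mul, Polynomial.mul_coeff_zero, hp]
    simp [shiftAlong]

theorem shiftAlong_linP (c w : Fin n → ℝ) :
    shiftAlong c (linP w) =
      Polynomial.C (linP w) + Polynomial.C (MvPolynomial.C (w ⬝ᵥ c)) * Polynomial.X := by
  simp only [linP, shiftAlong, map_sum, map_mul, MvPolynomial.aeval_X, MvPolynomial.aeval_C,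
    dotProduct, Finset.sum_mul, ← Finset.sum_add_distrib]
  refine Finset.sum_congr rfl fun j _ => ?_
  simp only [Polynomial.algebraMap_apply, MvPolynomial.algebraMap_eq]
  ring

theorem shiftAlong_linP_of_dotProduct_eq_zero {c w : Fin n → ℝ} (h : w ⬝ᵥ c = 0) :
    shiftAlong c (linP w) = Polynomial.C (linP w) := by
  rw [shiftAlong_linP, h, map_zero, map_zero, zero_mul, add_zero]

theorem map_quotient_mk_eq_zero_iff {R : Type*} [CommRing R] {J : Ideal R} {f : Polynomial R} :
    f.map (Ideal.Quotient.mk J) = 0 ↔ f ∈ J.map Polynomial.C := by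
  rw [← Polynomial.coe_mapRingHom, ← RingHom.mem_ker, Polynomial.ker_mapRingHom, Ideal.mk_ker]

theorem mem_of_linP_mul_mem {J : Ideal (MvPolynomial (Fin n) ℝ)} {c v : Fin n → ℝ}
    (hJ : J.map (shiftAlong c) ≤ J.map Polynomial.C) (hv : v ⬝ᵥ c = 1)
    {p : MvPolynomial (Fin n) ℝ} (hp : linP v * p ∈ J) : p ∈ J := by
  have h := map_quotient_mk_eq_zero_iff.mpr (hJ (Ideal.mem_map_of_mem _ hp))
  have hmonic : ((shiftAlong c (linP v)).map (Ideal.Quotient.mk J)).Monic := by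
    rw [shiftAlong_linP, hv, map_one, map_one, one_mul, Polynomial.map_add, Polynomial.map_C,
      Polynomial.map_X, add_comm]
    exact Polynomial.monic_X_add_C _
  rw [map_mul, Polynomial.map_mul, hmonic.mul_right_eq_zero_iff, map_quotient_mk_eq_zero_iff,
    Ideal.mem_map_C_iff] at h
  simpa only [coeff_zero_shiftAlong] using h 0

theorem exists_dotProduct_eq_one_of_notMem {s : Submodule ℝ (Fin n → ℝ)} {v : Fin n → ℝ}
    (hv : v ∉ s) : ∃ c : Fin n → ℝ, (∀ w ∈ s, w ⬝ᵥ c = 0) ∧ v ⬝ᵥ c = 1 := by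
  obtain ⟨f, hfs, hfv⟩ := LinearMap.exists_extend_of_notMem (0 : s →ₗ[ℝ] ℝ) hv 1
  have hf : ∀ w, w ⬝ᵥ (dotProductEquiv ℝ (Fin n)).symm f = f w := fun w => by
    rw [dotProduct_comm]
    exact LinearMap.congr_fun ((dotProductEquiv ℝ (Fin n)).apply_symm_apply f) w
  refine ⟨(dotProductEquiv ℝ (Fin n)).symm f, fun w hw => ?_, by rw [hf, hfv]⟩
  rw [hf]
  exact LinearMap.congr_fun hfs ⟨w, hw⟩

open Classical in
theorem shiftAlong_dRel {X : Fin m → Fin n → ℝ} {s : Submodule ℝ (Fin n → ℝ)} {c : Fin n → ℝ}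
    (hc : ∀ w ∈ s, w ⬝ᵥ c = 0) (W : Submodule ℝ (Fin n → ℝ)) :
    shiftAlong c (dRel X s W) = Polynomial.C (dRel X s W) := by
  rw [dRel, map_prod, map_prod]
  exact Finset.prod_congr rfl fun i hi =>
    shiftAlong_linP_of_dotProduct_eq_zero (hc _ (Finset.mem_filter.mp hi).2.1)

theorem map_shiftAlong_span_dRel_le {X : Fin m → Fin n → ℝ} {s : Submodule ℝ (Fin n → ℝ)}
    {c : Fin n → ℝ} (hc : ∀ w ∈ s, w ⬝ᵥ c = 0) (𝒲 : Set (Submodule ℝ (Fin n → ℝ))) :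
    (Ideal.span (dRel X s '' 𝒲)).map (shiftAlong c) ≤
      (Ideal.span (dRel X s '' 𝒲)).map Polynomial.C := by
  rw [Ideal.map_span, Ideal.span_le]
  rintro _ ⟨_, ⟨W, hW, rfl⟩, rfl⟩
  rw [shiftAlong_dRel hc]
  exact Ideal.mem_map_of_mem _ (Ideal.subset_span ⟨W, hW, rfl⟩)

open Classical in
theorem mem_of_dCompl_mul_mem {X : Fin m → Fin n → ℝ} {s : Submodule ℝ (Fin n → ℝ)}
    {J : Ideal (MvPolynomial (Fin n) ℝ)}
    (hJ : ∀ c : Fin n → ℝ, (∀ w ∈ s, w ⬝ᵥ c = 0) → J.map (shiftAlong c) ≤ J.map Polynomial.C)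
    {p : MvPolynomial (Fin n) ℝ} (hp : dCompl X s * p ∈ J) : p ∈ J := by
  rw [dCompl] at hp
  refine Finset.prod_induction _ (fun a => ∀ p, a * p ∈ J → p ∈ J)
    (fun a b ha hb p h => hb p (ha _ (by rwa [← mul_assoc])))
    (fun p h => by rwa [one_mul] at h) (fun i hi p h => ?_) p hp
  obtain ⟨c, hc, hv⟩ := exists_dotProduct_eq_one_of_notMem (Finset.mem_filter.mp hi).2
  exact mem_of_linP_mul_mem (hJ c hc) hv h

theorem Isub_inf_iSup_le (X : Fin m → Fin n → ℝ) (s : Submodule ℝ (Fin n → ℝ))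
    (𝒲 : Set (Submodule ℝ (Fin n → ℝ))) :
    Isub X s ⊓ ⨆ W ∈ 𝒲, Isub X W ≤ ⨆ W ∈ 𝒲, Isub X (W ⊓ s) := by
  set E := Ideal.span (dRel X s '' 𝒲)
  have hIE : ⨆ W ∈ 𝒲, Isub X W ≤ E := iSup₂_le fun W hW =>
    (Ideal.span_singleton_le_span_singleton.mpr (dRel_dvd_dCompl X s W)).trans
      (Ideal.span_mono (Set.singleton_subset_iff.mpr ⟨W, hW, rfl⟩))
  have hEmul :
      E ≤ Submodule.comap (LinearMap.mulLeft _ (dCompl X s)) (⨆ W ∈ 𝒲, Isub X (W ⊓ s)) := by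
    refine Submodule.span_le.mpr ?_
    rintro _ ⟨W, hW, rfl⟩
    rw [SetLike.mem_coe, Submodule.mem_comap, LinearMap.mulLeft_apply, dCompl_mul_dRel]
    exact le_iSup₂ (f := fun W _ => Isub X (W ⊓ s)) W hW (Ideal.subset_span rfl)
  rintro _ ⟨hfs, hfW⟩
  obtain ⟨a, rfl⟩ := Ideal.mem_span_singleton'.mp hfs
  rw [mul_comm] at hfW ⊢
  exact hEmul (mem_of_dCompl_mul_mem (fun c hc => map_shiftAlong_span_dRel_le hc 𝒲) (hIE hfW))

def rationalHyperplanes (X : Fin m → Fin n → ℝ) (s : Submodule ℝ (Fin n → ℝ)) :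
    Set (Submodule ℝ (Fin n → ℝ)) :=
  {t | RationalSub X t ∧ t < s ∧ Module.finrank ℝ t = Module.finrank ℝ s - 1}

theorem Isub_inf_le_iSup_rationalHyperplanes {X : Fin m → Fin n → ℝ}
    {s W : Submodule ℝ (Fin n → ℝ)} (hs : RationalSub X s) (hsW : ¬ s ≤ W) :
    Isub X (W ⊓ s) ≤ ⨆ t ∈ rationalHyperplanes X s, Isub X t := by
  set t := Submodule.span ℝ (Set.range X ∩ ↑(W ⊓ s))
  have htWs : t ≤ W ⊓ s := Submodule.span_le.mpr Set.inter_subset_right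
  have hts : t < s := (htWs.trans inf_le_right).lt_of_ne fun h => hsW (h ▸ htWs.trans inf_le_left)
  obtain ⟨u, hu, htu, hus, hrk⟩ := hs.exists_le_finrank_eq_pred (rationalSub_span_inter X _) hts
  rw [← Isub_span_inter]
  exact (Isub_mono X htu).trans (le_iSup₂ (f := fun t _ => Isub X t) u ⟨hu, hus, hrk⟩)

theorem Isub_inf_iSup_eq_iSup_rationalHyperplanes {X : Fin m → Fin n → ℝ}
    {s : Submodule ℝ (Fin n → ℝ)} (hs : RationalSub X s) {𝒲 : Set (Submodule ℝ (Fin n → ℝ))}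
    (hs𝒲 : ∀ W ∈ 𝒲, ¬ s ≤ W) (h𝒲 : rationalHyperplanes X s ⊆ 𝒲) :
    Isub X s ⊓ ⨆ W ∈ 𝒲, Isub X W = ⨆ t ∈ rationalHyperplanes X s, Isub X t :=
  le_antisymm
    ((Isub_inf_iSup_le X s 𝒲).trans
      (iSup₂_le fun W hW => Isub_inf_le_iSup_rationalHyperplanes hs (hs𝒲 W hW)))
    (iSup₂_le fun t ht => le_inf (Isub_mono X ht.2.1.le)
      (le_iSup₂ (f := fun W _ => Isub X W) t (h𝒲 ht)))

end

theorem stmt5_general {n m : ℕ} (X : Fin m → Fin n → ℝ)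
    (Q : Set (Submodule ℝ (Fin n → ℝ))) (hQ : Admissible X Q)
    (s : Submodule ℝ (Fin n → ℝ)) (hsQ : s ∈ Q)
    (k : ℕ) (hk : 1 ≤ k) (hdim : Module.finrank ℝ s = k)
    (hmax : ∀ t ∈ Q, Module.finrank ℝ t ≤ k) :
    Isub X s ⊓ IQ X (Q \ {s}) = Isub X s ⊓ Ilev X (k - 1) ∧
    Isub X s ⊓ Ilev X (k - 1) =
      ⨆ t ∈ {t : Submodule ℝ (Fin n → ℝ) |
          RationalSub X t ∧ t < s ∧ Module.finrank ℝ t = k - 1},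
        Isub X t := by
  subst hdim
  have hs : RationalSub X s := hQ.1 s hsQ
  have hQ_eq : Isub X s ⊓ IQ X (Q \ {s}) = ⨆ t ∈ rationalHyperplanes X s, Isub X t :=
    Isub_inf_iSup_eq_iSup_rationalHyperplanes hs
      (fun W hW hsW => hW.2 (Submodule.eq_of_le_of_finrank_le hsW (hmax W hW.1)).symm)
      fun t ht => ⟨hQ.2 s hsQ t ht.1 ht.2.1.le, ht.2.1.ne⟩
  have hlev_eq : Isub X s ⊓ Ilev X (Module.finrank ℝ s - 1) =
      ⨆ t ∈ rationalHyperplanes X s, Isub X t :=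
    Isub_inf_iSup_eq_iSup_rationalHyperplanes hs
      (fun W hW hsW => by have := Submodule.finrank_mono hsW; have := hW.2; omega)
      fun t ht => ⟨ht.1, ht.2.2⟩
  exact ⟨hQ_eq.trans hlev_eq.symm, hlev_eq⟩

theorem stmt5 {n m : ℕ} (X : Fin m → Fin n → ℝ)
    (hX0 : ∀ i, X i ≠ 0)
    (hspan : Submodule.span ℝ (Set.range X) = ⊤)
    (Q : Set (Submodule ℝ (Fin n → ℝ))) (hQ : Admissible X Q)
    (s : Submodule ℝ (Fin n → ℝ)) (hsQ : s ∈ Q)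
    (k : ℕ) (hk : 1 ≤ k) (hdim : Module.finrank ℝ s = k)
    (hmax : ∀ t ∈ Q, Module.finrank ℝ t ≤ k) :
    Isub X s ⊓ IQ X (Q \ {s}) = Isub X s ⊓ Ilev X (k - 1) ∧
    Isub X s ⊓ Ilev X (k - 1) =
      ⨆ t ∈ {t : Submodule ℝ (Fin n → ℝ) |
          RationalSub X t ∧ t < s ∧ Module.finrank ℝ t = k - 1},
        Isub X t :=
  stmt5_general X Q hQ s hsQ k hk hdim hmax
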